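/- arXiv:1707.05984 — 2 statements merged into one kernel-verified Lean document; each statement's English description precedes it below -/
import Mathlib

section
/- Let F_n = ⟨a_1, ..., a_n⟩ be the free group and (F, p) a pointed finite set. Let X = F^{(F_n)} be the set of finitely supported maps F_n → F with the left translation F_n-action, and let ψ : ⊕_{i=1}^n Z[X] → Z[X] be defined by ψ(f_1, ..., f_n) = Σ_{i=1}^n (f_i − a_i·f_i). Then the kernel of ψ equals the direct sum of n copies of Z·[1_p], where 1_p ∈ X is the constant map with value p. -/
/-- The set of finitely supported maps `F_n → F` relative to the base point `p`. -/
def FinSupp (n : ℕ) (F : Type) (p : F) : Type :=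
  {f : FreeGroup (Fin n) → F // {x : FreeGroup (Fin n) | f x ≠ p}.Finite}

/-- The left translation action of `F_n` on finitely supported maps:
`(w · f)(x) = f (w⁻¹ x)`. -/
instance FinSupp.instMulAction (n : ℕ) (F : Type) (p : F) :
    MulAction (FreeGroup (Fin n)) (FinSupp n F p) where
  smul w f := ⟨fun x => f.1 (w⁻¹ * x), by
    refine Set.Finite.subset (f.2.image (fun y => w * y)) ?_
    intro x hx
    exact ⟨w⁻¹ * x, hx, by group⟩⟩
  one_smul f := Subtype.ext (funext fun x => by
    show f.1 ((1 : FreeGroup (Fin n))⁻¹ * x) = f.1 x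
    simp)
  mul_smul u v f := Subtype.ext (funext fun x => by
    show f.1 ((u * v)⁻¹ * x) = f.1 (v⁻¹ * (u⁻¹ * x))
    rw [mul_inv_rev, mul_assoc])

/-- The constant map with value `p`. -/
def FinSupp.constP (n : ℕ) (F : Type) (p : F) : FinSupp n F p :=
  ⟨fun _ => p, by simp⟩

/-!
The constant map `1_p` is fixed by `F_n`, and every other `x ∈ X` has trivial stabiliser: if
`u ≠ 1` fixed `x`, the finite support of `x` would contain the infinite set `{uᵏ t}` for any `t`
in it, as free groups are torsion-free. Since `ψ` respects orbits, it remains to see that `ψ` is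
injective on the regular representation, i.e. that `∑ᵢ (hᵢ(w) - hᵢ(aᵢ⁻¹ w)) = 0` for all `w`
forces finitely supported `hᵢ : F_n → ℤ` to vanish. Take `u` of maximal length in the supports.
If `hⱼ(u) ≠ 0` and the reduced word of `u` does not start with `aⱼ⁻¹`, then at `w = aⱼ u` the
only surviving term is `-hⱼ(u)`. So every `j` with `hⱼ(u) ≠ 0` is the inverse of the first letter
of `u`, hence unique, and then at `w = u` the only surviving term is `hⱼ(u)`.
-/

namespace FreeGroup
variable {α : Type*} [DecidableEq α]

theorem toWord_mk_singleton_mul {x : α × Bool} {u : FreeGroup α}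
    (hu : u.toWord.head? ≠ some (x.1, !x.2)) : (mk [x] * u).toWord = x :: u.toWord := by
  rw [← mk_toWord (x := u), mul_mk, toWord_mk, mk_toWord]
  refine IsReduced.reduce_eq ?_
  cases hw : u.toWord with
  | nil => exact .singleton
  | cons y L =>
    refine isReduced_cons_cons.2 ⟨fun h1 => ?_, hw ▸ isReduced_toWord⟩
    rw [hw] at hu
    obtain ⟨x1, x2⟩ := x; obtain ⟨y1, y2⟩ := y
    cases x2 <;> cases y2 <;> simp_all

theorem toWord_of_mul {i : α} {u : FreeGroup α} (hu : u.toWord.head? ≠ some (i, false)) :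
    (of i * u).toWord = (i, true) :: u.toWord :=
  toWord_mk_singleton_mul hu

theorem norm_of_mul {i : α} {u : FreeGroup α} (hu : u.toWord.head? ≠ some (i, false)) :
    norm (of i * u) = norm u + 1 := by
  simp [norm, toWord_of_mul hu]

theorem norm_inv_of_mul {i : α} {u : FreeGroup α} (hu : u.toWord.head? ≠ some (i, true)) :
    norm ((of i)⁻¹ * u) = norm u + 1 := by
  have hinv : (of i)⁻¹ = mk [(i, false)] := rfl
  simp [hinv, norm, toWord_mk_singleton_mul (x := (i, false)) hu]

section TopNorm

variable {ι M : Type*} [DecidableEq ι] [Fintype ι] [AddCommGroup M]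
  {h : ι → FreeGroup ι → M} {u : FreeGroup ι}

theorem head_toWord_eq_of_apply_ne_zero (hψ : ∀ w, ∑ i, (h i w - h i ((of i)⁻¹ * w)) = 0)
    (hmax : ∀ i v, norm u < norm v → h i v = 0) {j : ι} (hj : h j u ≠ 0) :
    u.toWord.head? = some (j, false) := by
  by_contra hu
  have hv : norm (of j * u) = norm u + 1 := norm_of_mul hu
  have hterm : ∀ i, h i (of j * u) - h i ((of i)⁻¹ * (of j * u)) =
      if i = j then -h j u else 0 := fun i => by
    rw [hmax i _ (by omega), zero_sub]
    split_ifs with hij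
    · rw [hij, inv_mul_cancel_left]
    · have hhead : (of j * u).toWord.head? ≠ some (i, true) := by
        simp [toWord_of_mul hu, Ne.symm hij]
      rw [hmax i _ (by rw [norm_inv_of_mul hhead]; omega), neg_zero]
  have := hψ (of j * u)
  simp only [hterm, Finset.sum_ite_eq', Finset.mem_univ, if_true, neg_eq_zero] at this
  exact hj this

theorem apply_eq_zero_of_forall_norm_lt (hψ : ∀ w, ∑ i, (h i w - h i ((of i)⁻¹ * w)) = 0)
    (hmax : ∀ i v, norm u < norm v → h i v = 0) (j : ι) : h j u = 0 := by
  by_contra hj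
  have hhead := head_toWord_eq_of_apply_ne_zero hψ hmax hj
  have hterm : ∀ i, h i u - h i ((of i)⁻¹ * u) = h i u := fun i => by
    rw [hmax i ((of i)⁻¹ * u) (by rw [norm_inv_of_mul (by simp [hhead])]; omega), sub_zero]
  have hsingle : ∀ i ∈ Finset.univ, i ≠ j → h i u = 0 := fun i _ hij => by
    by_contra hi
    rw [head_toWord_eq_of_apply_ne_zero hψ hmax hi] at hhead
    simp_all
  have := hψ u
  simp only [hterm, Finset.sum_eq_single_of_mem j (Finset.mem_univ j) hsingle] at this
  exact hj this

end TopNorm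

theorem eq_zero_of_forall_sum_sub_eq_zero {ι M : Type*} [Fintype ι] [AddCommGroup M]
    (h : ι → FreeGroup ι →₀ M) (hψ : ∀ w, ∑ i, (h i w - h i ((of i)⁻¹ * w)) = 0) : h = 0 := by
  classical
  by_contra hne
  obtain ⟨j₀, hj₀⟩ := Function.ne_iff.mp hne
  set S := Finset.univ.biUnion fun i => (h i).support
  have hS : S.Nonempty := ⟨_, Finset.mem_biUnion.2 ⟨j₀, Finset.mem_univ _,
    (Finsupp.support_nonempty_iff.2 hj₀).choose_spec⟩⟩
  obtain ⟨u, huS, hu⟩ := S.exists_max_image norm hS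
  have hmax : ∀ i v, norm u < norm v → h i v = 0 := fun i v huv => by
    by_contra hv
    have hvS : v ∈ S := Finset.mem_biUnion.2 ⟨i, Finset.mem_univ _, Finsupp.mem_support_iff.2 hv⟩
    exact (hu v hvS).not_gt huv
  obtain ⟨j, -, hj⟩ := Finset.mem_biUnion.1 huS
  exact Finsupp.mem_support_iff.1 hj (apply_eq_zero_of_forall_norm_lt hψ hmax j)

end FreeGroup

section Psi

variable {ι G X M : Type*} [Fintype ι] [Group G] [MulAction G X] [AddCommGroup M]

noncomputable def psi (a : ι → G) (g : ι → X →₀ M) : X →₀ M :=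
  ∑ i, (g i - (g i).mapDomain (a i • ·))

theorem psi_apply (a : ι → G) (g : ι → X →₀ M) (y : X) :
    psi a g y = ∑ i, (g i y - g i ((a i)⁻¹ • y)) := by
  simp only [psi, Finsupp.finsetSum_apply, Finsupp.sub_apply]
  refine Finset.sum_congr rfl fun i _ => congrArg (g i y - ·) ?_
  exact Finsupp.mapDomain_equiv_apply (f := MulAction.toPerm (a i)) (g i) y

theorem apply_eq_zero_of_psi_eq_zero [MulAction (FreeGroup ι) X] {g : ι → X →₀ M}
    (hg : psi FreeGroup.of g = 0) {x : X}
    (hx : Function.Injective (· • x : FreeGroup ι → X)) (i : ι) : g i x = 0 := by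
  let h : ι → FreeGroup ι →₀ M := fun i => (g i).comapDomain (· • x) hx.injOn
  have hψ : ∀ w, ∑ i, (h i w - h i ((FreeGroup.of i)⁻¹ * w)) = 0 := fun w => by
    simpa [h, mul_smul, psi_apply] using congrArg (· (w • x)) hg
  simpa [h] using congrArg (· i 1) (FreeGroup.eq_zero_of_forall_sum_sub_eq_zero h hψ)

end Psi

namespace FinSupp

variable {n : ℕ} {F : Type} {p : F}

theorem smul_constP (w : FreeGroup (Fin n)) : w • constP n F p = constP n F p := rfl

theorem eq_one_of_smul_eq {x : FinSupp n F p} (hx : x ≠ constP n F p) {u : FreeGroup (Fin n)}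
    (hu : u • x = x) : u = 1 := by
  by_contra hu₁
  obtain ⟨t, ht⟩ : ∃ t, x.1 t ≠ p := by
    by_contra! h
    exact hx (Subtype.ext (funext h))
  have hfix : ∀ s, x.1 (u * s) = x.1 s := fun s => by
    conv_lhs => rw [← hu]
    show x.1 (u⁻¹ * (u * s)) = x.1 s
    simp
  have hpow : ∀ k : ℕ, x.1 (u ^ k * t) ≠ p := fun k => by
    induction k with
    | zero => simpa using ht
    | succ k ih => rwa [pow_succ', mul_assoc, hfix]
  obtain ⟨k, l, hkl, hkl'⟩ := Set.Finite.exists_lt_map_eq_of_forall_mem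
    (f := fun k : ℕ => u ^ k * t) hpow x.2
  have := injective_pow_iff_not_isOfFinOrder.2 (not_isOfFinOrder_of_isMulTorsionFree hu₁)
    (mul_right_cancel hkl')
  omega

theorem smul_left_injective {x : FinSupp n F p} (hx : x ≠ constP n F p) :
    Function.Injective (· • x : FreeGroup (Fin n) → FinSupp n F p) := fun v w hvw => by
  have : (v⁻¹ * w) • x = x := by
    simp only at hvw
    rw [mul_smul, ← hvw, inv_smul_smul]
  exact inv_mul_eq_one.1 (eq_one_of_smul_eq hx this)

end FinSupp

theorem kernel_of_psi_general (n : ℕ) (F : Type) (p : F)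
    (g : Fin n → (FinSupp n F p →₀ ℤ)) :
    (∑ i : Fin n,
        (g i - Finsupp.mapDomain (fun f : FinSupp n F p => FreeGroup.of i • f) (g i))) = 0
      ↔ ∀ i : Fin n, ∃ c : ℤ, g i = c • Finsupp.single (FinSupp.constP n F p) (1 : ℤ) := by
  constructor
  · intro hg i
    refine ⟨g i (FinSupp.constP n F p), Finsupp.ext fun y => ?_⟩
    by_cases hy : y = FinSupp.constP n F p
    · simp [hy]
    · simp [Ne.symm hy, apply_eq_zero_of_psi_eq_zero hg (FinSupp.smul_left_injective hy)]
  · intro hg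
    refine Finset.sum_eq_zero fun i _ => ?_
    obtain ⟨c, hc⟩ := hg i
    rw [hc, Finsupp.mapDomain_smul, Finsupp.mapDomain_single, FinSupp.smul_constP, sub_self]

/-- The kernel of `ψ : ⊕ᵢ ℤ[X] → ℤ[X]`, `ψ(f₁,…,fₙ) = Σᵢ (fᵢ - aᵢ·fᵢ)`, where
`X` is the set of finitely supported maps `F_n → F`, consists exactly of the
tuples of integer multiples of the constant map `1_p`. -/
theorem kernel_of_psi (n : ℕ) (F : Type) [Finite F] (p : F)
    (g : Fin n → (FinSupp n F p →₀ ℤ)) :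
    (∑ i : Fin n,
        (g i - Finsupp.mapDomain (fun f : FinSupp n F p => FreeGroup.of i • f) (g i))) = 0
      ↔ ∀ i : Fin n, ∃ c : ℤ, g i = c • Finsupp.single (FinSupp.constP n F p) (1 : ℤ) :=
  kernel_of_psi_general n F p g
end

section
/- Let F_n = ⟨a_1,...,a_n⟩ and (F,p) a pointed finite set. For the left translation action of F_n on the set X of finitely supported maps F_n → F, the set R of all maps whose support has convex hull (in the Cayley graph of F_n) an admissible tree — i.e., a finite subtree whose barycentre is either the vertex e or an edge [e, a_i] for some i — is a complete set of representatives for the F_n-orbits in X: every element of X lies in the orbit of exactly one element of R. -/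
/-- The Cayley graph of the free group `F_n` with respect to the free generators. -/
def Cayley (n : ℕ) : SimpleGraph (FreeGroup (Fin n)) where
  Adj x y := x ≠ y ∧ ∃ i : Fin n, y = x * FreeGroup.of i ∨ x = y * FreeGroup.of i
  symm := by
    constructor
    rintro x y ⟨h, i, hi⟩
    exact ⟨h.symm, i, hi.symm⟩
  loopless := by constructor; rintro x ⟨h, -⟩; exact h rfl

/-- The convex hull of a set of vertices in the Cayley tree: the set of vertices
lying on a geodesic between two points of the set. -/
def cayleyHull (n : ℕ) (S : Set (FreeGroup (Fin n))) : Set (FreeGroup (Fin n)) :=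
  {v | ∃ a ∈ S, ∃ b ∈ S,
    (Cayley n).dist a v + (Cayley n).dist v b = (Cayley n).dist a b}

/-- Eccentricity of a vertex relative to a set of vertices. -/
noncomputable def cayleyEcc (n : ℕ) (S : Set (FreeGroup (Fin n)))
    (v : FreeGroup (Fin n)) : ℕ :=
  sSup ((fun u => (Cayley n).dist v u) '' S)

/-- The barycentre of a finite subtree `S` of the Cayley tree (the vertex or the
pair of adjacent vertices left after repeatedly deleting terminal vertices),
realised as the set of vertices of `S` of minimal eccentricity. -/
def cayleyBarycentre (n : ℕ) (S : Set (FreeGroup (Fin n))) : Set (FreeGroup (Fin n)) :=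
  {v ∈ S | ∀ u ∈ S, cayleyEcc n S v ≤ cayleyEcc n S u}

/-!
The Cayley graph is the tree of reduced words; its path metric is the word metric
`wordDist x y = ‖x⁻¹ * y‖`, which is read off the longest common prefix of the reduced words of
`x` and `y`. If `a, b` is a diametral pair of a finite nonempty support, at distance `D`, then
every vertex has eccentricity at least `⌈D/2⌉` with respect to the hull, and the vertices of the
hull attaining it are the midpoint(s) of the geodesic from `a` to `b`: a vertex if `D` is even,
the two ends of an edge if `D` is odd. Left translation is a tree automorphism, so it carries
hulls and barycentres along. Translating the barycentre to `e` or `[e, a_i]` produces the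
representative, and no non-trivial translation carries one such barycentre to another.
-/

namespace List

variable {α : Type*} [DecidableEq α]

def commonPrefixLength : List α → List α → ℕ
  | a :: u, b :: v => if a = b then commonPrefixLength u v + 1 else 0
  | _, _ => 0

@[simp] lemma commonPrefixLength_nil_left (v : List α) : commonPrefixLength [] v = 0 := by
  cases v <;> rfl

@[simp] lemma commonPrefixLength_nil_right (u : List α) : commonPrefixLength u [] = 0 := by
  cases u <;> rfl

lemma commonPrefixLength_cons_cons (a b : α) (u v : List α) :
    commonPrefixLength (a :: u) (b :: v) = if a = b then commonPrefixLength u v + 1 else 0 :=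
  rfl

lemma commonPrefixLength_comm : ∀ u v : List α, commonPrefixLength u v = commonPrefixLength v u
  | [], v => by simp
  | a :: u, [] => by simp
  | a :: u, b :: v => by
    simp only [commonPrefixLength_cons_cons, commonPrefixLength_comm u v, eq_comm]

lemma commonPrefixLength_le_length_left :
    ∀ u v : List α, commonPrefixLength u v ≤ u.length
  | [], v => by simp
  | a :: u, [] => by simp
  | a :: u, b :: v => by
    rw [commonPrefixLength_cons_cons]
    split
    · simpa using commonPrefixLength_le_length_left u v
    · simp

lemma commonPrefixLength_eq_length_left_iff :
    ∀ u v : List α, commonPrefixLength u v = u.length ↔ u <+: v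
  | [], v => by simp
  | a :: u, [] => by simp
  | a :: u, b :: v => by
    rw [commonPrefixLength_cons_cons, cons_prefix_cons]
    split
    case isTrue h => simp [h, commonPrefixLength_eq_length_left_iff u v]
    case isFalse h => simp [h]

lemma min_commonPrefixLength_le :
    ∀ u w v : List α,
      min (commonPrefixLength u w) (commonPrefixLength w v) ≤ commonPrefixLength u v
  | a :: u, b :: w, c :: v => by
    simp only [commonPrefixLength_cons_cons]
    by_cases hab : a = b
    · by_cases hbc : b = c
      · subst hab hbc
        simpa using min_commonPrefixLength_le u w v
      · simp [hbc]
    · simp [hab]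
  | [], w, v => by simp
  | u, [], v => by simp
  | u, w, [] => by simp

end List

namespace FreeGroup

variable {α : Type*} [DecidableEq α]

open List

lemma norm_mk_of_isReduced {L : List (α × Bool)} (h : IsReduced L) : norm (mk L) = L.length := by
  rw [norm, toWord_mk, h.reduce_eq]

lemma IsReduced.invRev {L : List (α × Bool)} (h : IsReduced L) : IsReduced (invRev L) :=
  IsReduced.of_reduce_eq (by rw [reduce_invRev, h.reduce_eq])

lemma norm_inv_mk_mul_mk_add_two_mul_commonPrefixLength :
    ∀ u v : List (α × Bool), IsReduced u → IsReduced v →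
      norm ((mk u)⁻¹ * mk v) + 2 * commonPrefixLength u v = u.length + v.length
  | [], v, _, hv => by simp [← one_eq_mk, norm_mk_of_isReduced hv]
  | a :: u, [], hu, _ => by
    rw [← one_eq_mk, mul_one, norm_inv_eq, norm_mk_of_isReduced hu]
    simp
  | a :: u, b :: v, hu, hv => by
    by_cases hab : a = b
    · subst hab
      have hcancel : (mk (a :: u))⁻¹ * mk (a :: v) = (mk u)⁻¹ * mk v := by
        rw [show a :: u = [a] ++ u from rfl, show a :: v = [a] ++ v from rfl, ← mul_mk, ← mul_mk]
        group
      have ih := norm_inv_mk_mul_mk_add_two_mul_commonPrefixLength u v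
        (hu.infix (suffix_cons a u).isInfix) (hv.infix (suffix_cons a v).isInfix)
      rw [hcancel, commonPrefixLength_cons_cons, if_pos rfl, length_cons, length_cons]
      omega
    · -- the last letter of `invRev (a :: u)` is `a⁻¹ ≠ b`, so nothing cancels
      have hred : IsReduced (invRev (a :: u) ++ b :: v) := by
        refine hu.invRev.append hv ?_
        intro x hx y hy
        simp only [invRev, map_cons, reverse_cons, getLast?_append, getLast?_singleton,
          getLast?_reverse, head?_map, Option.some_or, Option.mem_def, Option.some.injEq,
          head?_cons] at hx hy
        subst hx hy
        intro h1
        by_contra h2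
        exact hab (Prod.ext h1 (by simpa using h2))
      rw [inv_mk, mul_mk, norm_mk_of_isReduced hred, commonPrefixLength_cons_cons, if_neg hab]
      simp only [length_append, invRev_length, length_cons]
      omega

def wordDist (x y : FreeGroup α) : ℕ := norm (x⁻¹ * y)

lemma wordDist_add_two_mul_commonPrefixLength (x y : FreeGroup α) :
    wordDist x y + 2 * commonPrefixLength x.toWord y.toWord = norm x + norm y := by
  have h := norm_inv_mk_mul_mk_add_two_mul_commonPrefixLength x.toWord y.toWord
    isReduced_toWord isReduced_toWord
  rwa [mk_toWord, mk_toWord] at h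

@[simp] lemma wordDist_self (x : FreeGroup α) : wordDist x x = 0 := by simp [wordDist]

@[simp] lemma wordDist_self_mul (a x : FreeGroup α) : wordDist a (a * x) = norm x := by
  simp [wordDist]

@[simp] lemma one_wordDist (x : FreeGroup α) : wordDist 1 x = norm x := by simp [wordDist]

lemma wordDist_comm (x y : FreeGroup α) : wordDist x y = wordDist y x := by
  rw [wordDist, ← norm_inv_eq, mul_inv_rev, inv_inv, wordDist]

@[simp] lemma wordDist_mul_left (g x y : FreeGroup α) :
    wordDist (g * x) (g * y) = wordDist x y := by
  simp [wordDist, mul_assoc]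

lemma wordDist_triangle (x y z : FreeGroup α) : wordDist x z ≤ wordDist x y + wordDist y z := by
  simpa [wordDist, mul_assoc] using norm_mul_le (x⁻¹ * y) (y⁻¹ * z)

lemma wordDist_add_wordDist_modEq (v a b : FreeGroup α) :
    wordDist v a + wordDist v b ≡ wordDist a b [MOD 2] := by
  have ha := wordDist_add_two_mul_commonPrefixLength 1 (v⁻¹ * a)
  have hb := wordDist_add_two_mul_commonPrefixLength 1 (v⁻¹ * b)
  have hab := wordDist_add_two_mul_commonPrefixLength (v⁻¹ * a) (v⁻¹ * b)
  simp only [one_wordDist, wordDist_mul_left, norm_one] at ha hb hab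
  rw [← wordDist_mul_left v⁻¹ v a, ← wordDist_mul_left v⁻¹ v b, inv_mul_cancel, one_wordDist,
    one_wordDist, Nat.ModEq]
  omega

def Between (a m b : FreeGroup α) : Prop := wordDist a m + wordDist m b = wordDist a b

@[simp] lemma between_mul_left_iff {g a m b : FreeGroup α} :
    Between (g * a) (g * m) (g * b) ↔ Between a m b := by
  simp [Between]

lemma between_self_left (a b : FreeGroup α) : Between a a b := by simp [Between]

lemma between_one_iff {m b : FreeGroup α} : Between 1 m b ↔ m.toWord <+: b.toWord := by
  have h := wordDist_add_two_mul_commonPrefixLength m b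
  have := commonPrefixLength_le_length_left m.toWord b.toWord
  rw [Between, one_wordDist, one_wordDist, ← commonPrefixLength_eq_length_left_iff]
  change _ ↔ _ = norm m
  omega

-- Common prefix lengths satisfy the ultrametric inequality: this is where the tree shows up.
lemma Between.between_one_or {a m b : FreeGroup α} (h : Between a m b) :
    Between 1 m a ∨ Between 1 m b := by
  have hma := wordDist_add_two_mul_commonPrefixLength m a
  have hmb := wordDist_add_two_mul_commonPrefixLength m b
  have hab := wordDist_add_two_mul_commonPrefixLength a b
  have := commonPrefixLength_le_length_left m.toWord a.toWord
  have := commonPrefixLength_le_length_left m.toWord b.toWord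
  have := min_commonPrefixLength_le a.toWord m.toWord b.toWord
  rw [commonPrefixLength_comm a.toWord] at this
  rw [between_one_iff, between_one_iff, ← commonPrefixLength_eq_length_left_iff,
    ← commonPrefixLength_eq_length_left_iff]
  rw [Between, wordDist_comm a m] at h
  have hm : norm m = m.toWord.length := rfl
  omega

lemma Between.or {a m b : FreeGroup α} (h : Between a m b) (s : FreeGroup α) :
    Between s m a ∨ Between s m b := by
  rw [← between_mul_left_iff (g := s⁻¹), ← between_mul_left_iff (g := s⁻¹) (a := s) (m := m),
    inv_mul_cancel]
  exact (between_mul_left_iff.2 h).between_one_or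

lemma wordDist_le_max_of_between {a m b : FreeGroup α} (h : Between a m b) (v : FreeGroup α) :
    wordDist v m ≤ max (wordDist v a) (wordDist v b) := by
  rcases h.or v with h | h <;> unfold Between at h <;> omega

def geodesicPoint (a b : FreeGroup α) (k : ℕ) : FreeGroup α :=
  a * mk ((a⁻¹ * b).toWord.take k)

lemma wordDist_geodesicPoint_left {a b : FreeGroup α} {k : ℕ} (hk : k ≤ wordDist a b) :
    wordDist a (geodesicPoint a b k) = k := by
  rw [geodesicPoint, wordDist_self_mul,
    norm_mk_of_isReduced (isReduced_toWord.infix (take_prefix _ _).isInfix), length_take]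
  exact min_eq_left hk

lemma wordDist_geodesicPoint_right (a b : FreeGroup α) (k : ℕ) :
    wordDist (geodesicPoint a b k) b = wordDist a b - k := by
  have hb : a * (mk ((a⁻¹ * b).toWord.take k) * mk ((a⁻¹ * b).toWord.drop k)) = b := by
    rw [mul_mk, take_append_drop, mk_toWord, mul_inv_cancel_left]
  calc wordDist (geodesicPoint a b k) b
      = wordDist (a * mk ((a⁻¹ * b).toWord.take k))
          (a * (mk ((a⁻¹ * b).toWord.take k) * mk ((a⁻¹ * b).toWord.drop k))) := by
        rw [hb, geodesicPoint]
    _ = (a⁻¹ * b).toWord.length - k := by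
        rw [wordDist_mul_left, wordDist_self_mul,
          norm_mk_of_isReduced (isReduced_toWord.infix (drop_suffix _ _).isInfix), length_drop]

lemma between_geodesicPoint {a b : FreeGroup α} {k : ℕ} (hk : k ≤ wordDist a b) :
    Between a (geodesicPoint a b k) b := by
  rw [Between, wordDist_geodesicPoint_left hk, wordDist_geodesicPoint_right]
  omega

lemma Between.eq_geodesicPoint {a v b : FreeGroup α} (h : Between a v b) :
    v = geodesicPoint a b (wordDist a v) := by
  have hpre : (a⁻¹ * v).toWord <+: (a⁻¹ * b).toWord := by
    rw [← between_one_iff, ← between_mul_left_iff (g := a), mul_one, mul_inv_cancel_left,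
      mul_inv_cancel_left]
    exact h
  calc v = a * mk (a⁻¹ * v).toWord := by rw [mk_toWord, mul_inv_cancel_left]
    _ = geodesicPoint a b (wordDist a v) := by rw [prefix_iff_eq_take.1 hpre]; rfl

lemma exists_geodesicPoint_succ_eq_mul (a b : FreeGroup α) (k : ℕ) (hk : k < wordDist a b) :
    ∃ e : α × Bool, geodesicPoint a b (k + 1) = geodesicPoint a b k * mk [e] := by
  refine ⟨(a⁻¹ * b).toWord[k]'hk, ?_⟩
  rw [geodesicPoint, geodesicPoint, take_add_one, getElem?_eq_getElem hk, Option.toList_some,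
    ← mul_mk, mul_assoc]

lemma wordDist_geodesicPoint_le (a b s : FreeGroup α) {k : ℕ} (hk : k ≤ wordDist a b) :
    wordDist s (geodesicPoint a b k) ≤
      max (wordDist s a - k) (wordDist s b - (wordDist a b - k)) := by
  have hl := wordDist_geodesicPoint_left hk
  have hr := wordDist_geodesicPoint_right a b k
  rw [wordDist_comm a] at hl
  rcases (between_geodesicPoint hk).or s with h | h <;> unfold Between at h <;> omega

-- Parity forces `wordDist v a + wordDist v b = wordDist a b`, so `v` lies on the geodesic.
lemma eq_geodesicPoint_of_wordDist_le {a b v : FreeGroup α}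
    (ha : wordDist v a ≤ wordDist a b - wordDist a b / 2)
    (hb : wordDist v b ≤ wordDist a b - wordDist a b / 2) :
    v = geodesicPoint a b (wordDist a b / 2) ∨
      v = geodesicPoint a b (wordDist a b - wordDist a b / 2) := by
  have htri := wordDist_triangle a v b
  have hpar := wordDist_add_wordDist_modEq v a b
  rw [wordDist_comm a v] at htri
  have hv : Between a v b := by
    unfold Nat.ModEq at hpar
    rw [Between, wordDist_comm a v]
    omega
  rw [hv.eq_geodesicPoint, wordDist_comm a v]
  have : wordDist v a = wordDist a b / 2 ∨ wordDist v a = wordDist a b - wordDist a b / 2 := by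
    unfold Nat.ModEq at hpar
    omega
  rcases this with h | h <;> simp [h]

end FreeGroup

open FreeGroup

namespace Cayley

variable {n : ℕ}

lemma adj_mul_mk_singleton (x : FreeGroup (Fin n)) (e : Fin n × Bool) :
    (Cayley n).Adj x (x * mk [e]) := by
  refine ⟨fun h => ?_, e.1, ?_⟩
  · have h1 : mk [e] = 1 := by simpa using h
    simpa [h1] using norm_mk_of_isReduced (IsReduced.singleton (a := e))
  · rcases e with ⟨i, _ | _⟩
    · right
      rw [show mk [(i, false)] = (of i)⁻¹ from rfl, inv_mul_cancel_right]
    · left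
      rfl

lemma exists_walk_mul_mk_length_eq (x : FreeGroup (Fin n)) :
    ∀ w : List (Fin n × Bool), ∃ p : (Cayley n).Walk x (x * mk w), p.length = w.length
  | [] => ⟨SimpleGraph.Walk.nil.copy rfl (by rw [← one_eq_mk, mul_one]), by simp⟩
  | e :: w => by
    obtain ⟨p, hp⟩ := exists_walk_mul_mk_length_eq (x * mk [e]) w
    have he : x * mk [e] * mk w = x * mk (e :: w) := by rw [mul_assoc, mul_mk]; rfl
    exact ⟨.cons (adj_mul_mk_singleton x e) (p.copy rfl he), by simp [hp]⟩

lemma exists_walk_length_eq_wordDist (x y : FreeGroup (Fin n)) :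
    ∃ p : (Cayley n).Walk x y, p.length = wordDist x y := by
  obtain ⟨p, hp⟩ := exists_walk_mul_mk_length_eq x (x⁻¹ * y).toWord
  refine ⟨p.copy rfl (by rw [mk_toWord, mul_inv_cancel_left]), ?_⟩
  rw [SimpleGraph.Walk.length_copy, hp]
  rfl

lemma wordDist_eq_one_of_adj {x y : FreeGroup (Fin n)} (h : (Cayley n).Adj x y) :
    wordDist x y = 1 := by
  obtain ⟨-, i, rfl | rfl⟩ := h
  · simp
  · rw [wordDist_comm]; simp

lemma wordDist_le_length {x y : FreeGroup (Fin n)} (p : (Cayley n).Walk x y) :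
    wordDist x y ≤ p.length := by
  induction p with
  | nil => simp
  | @cons u v w h p ih =>
    calc wordDist u w ≤ wordDist u v + wordDist v w := wordDist_triangle u v w
      _ ≤ (p.cons h).length := by rw [wordDist_eq_one_of_adj h, SimpleGraph.Walk.length_cons]; omega

lemma dist_eq_wordDist (x y : FreeGroup (Fin n)) : (Cayley n).dist x y = wordDist x y := by
  obtain ⟨p, hp⟩ := exists_walk_length_eq_wordDist x y
  obtain ⟨q, hq⟩ := p.reachable.exists_walk_length_eq_dist
  exact le_antisymm (hp ▸ SimpleGraph.dist_le p) (hq ▸ wordDist_le_length q)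

end Cayley

section Hull

variable {n : ℕ}

lemma cayleyHull_eq (S : Set (FreeGroup (Fin n))) :
    cayleyHull n S = {v | ∃ a ∈ S, ∃ b ∈ S, Between a v b} := by
  simp only [cayleyHull, Cayley.dist_eq_wordDist, Between]

lemma subset_cayleyHull (S : Set (FreeGroup (Fin n))) : S ⊆ cayleyHull n S :=
  fun v hv => (cayleyHull_eq S).symm ▸ ⟨v, hv, v, hv, between_self_left v v⟩

lemma cayleyEcc_cayleyHull_le_iff {S : Set (FreeGroup (Fin n))} (hfin : S.Finite)
    (hne : S.Nonempty) {v : FreeGroup (Fin n)} {K : ℕ} :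
    cayleyEcc n (cayleyHull n S) v ≤ K ↔ ∀ s ∈ S, wordDist v s ≤ K := by
  have hull_le : ∀ K, (∀ s ∈ S, wordDist v s ≤ K) → ∀ u ∈ cayleyHull n S, wordDist v u ≤ K := by
    rw [cayleyHull_eq]
    rintro K hK u ⟨a, ha, b, hb, hu⟩
    exact (wordDist_le_max_of_between hu v).trans (max_le (hK a ha) (hK b hb))
  obtain ⟨s₀, -, hs₀⟩ := Set.exists_max_image S (wordDist v) hfin hne
  have hbdd : BddAbove ((fun u => (Cayley n).dist v u) '' cayleyHull n S) := by
    refine ⟨wordDist v s₀, Set.forall_mem_image.2 fun u hu => ?_⟩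
    rw [Cayley.dist_eq_wordDist]
    exact hull_le _ hs₀ u hu
  rw [cayleyEcc, csSup_le_iff hbdd ((hne.mono (subset_cayleyHull S)).image _),
    Set.forall_mem_image]
  simp only [Cayley.dist_eq_wordDist]
  exact ⟨fun h s hs => h (subset_cayleyHull S hs), hull_le K⟩

lemma cayleyHull_image_mul_left (g : FreeGroup (Fin n)) (S : Set (FreeGroup (Fin n))) :
    cayleyHull n ((g * ·) '' S) = (g * ·) '' cayleyHull n S := by
  ext v
  simp only [cayleyHull_eq, Set.mem_image, Set.mem_ofPred_eq, exists_exists_and_eq_and]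
  constructor
  · rintro ⟨a, ha, b, hb, h⟩
    exact ⟨g⁻¹ * v, ⟨a, ha, b, hb, by simpa using between_mul_left_iff (g := g⁻¹) |>.2 h⟩, by simp⟩
  · rintro ⟨u, ⟨a, ha, b, hb, h⟩, rfl⟩
    exact ⟨a, ha, b, hb, between_mul_left_iff.2 h⟩

lemma cayleyEcc_image_mul_left (g : FreeGroup (Fin n)) (H : Set (FreeGroup (Fin n)))
    (v : FreeGroup (Fin n)) : cayleyEcc n ((g * ·) '' H) (g * v) = cayleyEcc n H v := by
  simp only [cayleyEcc, Set.image_image, Cayley.dist_eq_wordDist, wordDist_mul_left]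

lemma cayleyBarycentre_image_mul_left (g : FreeGroup (Fin n)) (H : Set (FreeGroup (Fin n))) :
    cayleyBarycentre n ((g * ·) '' H) = (g * ·) '' cayleyBarycentre n H := by
  ext v
  constructor
  · rintro ⟨⟨u, hu, rfl⟩, hmin⟩
    refine ⟨u, ⟨hu, fun u' hu' => ?_⟩, rfl⟩
    simpa only [cayleyEcc_image_mul_left] using hmin (g * u') ⟨u', hu', rfl⟩
  · rintro ⟨u, ⟨hu, hmin⟩, rfl⟩
    refine ⟨⟨u, hu, rfl⟩, Set.forall_mem_image.2 fun u' hu' => ?_⟩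
    simpa only [cayleyEcc_image_mul_left] using hmin u' hu'

lemma cayleyBarycentre_eq_of_le_cayleyEcc {H : Set (FreeGroup (Fin n))} {R : ℕ}
    (hR : ∀ v, R ≤ cayleyEcc n H v) (hex : ∃ v ∈ H, cayleyEcc n H v ≤ R) :
    cayleyBarycentre n H = {v ∈ H | cayleyEcc n H v ≤ R} := by
  obtain ⟨v₀, hv₀, hv₀R⟩ := hex
  ext v
  exact ⟨fun ⟨hv, hmin⟩ => ⟨hv, (hmin v₀ hv₀).trans hv₀R⟩,
    fun ⟨hv, hvR⟩ => ⟨hv, fun u _ => hvR.trans (hR u)⟩⟩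

lemma cayleyHull_sep_forall_wordDist_le_eq {S : Set (FreeGroup (Fin n))} {a b : FreeGroup (Fin n)}
    (ha : a ∈ S) (hb : b ∈ S) (hdiam : ∀ x ∈ S, ∀ y ∈ S, wordDist x y ≤ wordDist a b) :
    {v ∈ cayleyHull n S | ∀ s ∈ S, wordDist v s ≤ wordDist a b - wordDist a b / 2} =
      {geodesicPoint a b (wordDist a b / 2),
        geodesicPoint a b (wordDist a b - wordDist a b / 2)} := by
  have mem : ∀ k, wordDist a b / 2 ≤ k → k ≤ wordDist a b - wordDist a b / 2 →
      geodesicPoint a b k ∈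
        {v ∈ cayleyHull n S | ∀ s ∈ S, wordDist v s ≤ wordDist a b - wordDist a b / 2} := by
    intro k hk₁ hk₂
    have hk : k ≤ wordDist a b := by omega
    refine ⟨(cayleyHull_eq S).symm ▸ ⟨a, ha, b, hb, between_geodesicPoint hk⟩, fun s hs => ?_⟩
    have := wordDist_geodesicPoint_le a b s hk
    have := hdiam s hs a ha
    have := hdiam s hs b hb
    rw [wordDist_comm]
    omega
  ext v
  constructor
  · rintro ⟨-, hv⟩
    exact eq_geodesicPoint_of_wordDist_le (hv a ha) (hv b hb)
  · rintro (rfl | rfl)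
    · exact mem _ le_rfl (by omega)
    · exact mem _ (by omega) le_rfl

theorem cayleyBarycentre_cayleyHull_eq_singleton_or_adj {S : Set (FreeGroup (Fin n))}
    (hfin : S.Finite) (hne : S.Nonempty) :
    (∃ c, cayleyBarycentre n (cayleyHull n S) = {c}) ∨
      ∃ c c', (Cayley n).Adj c c' ∧ cayleyBarycentre n (cayleyHull n S) = {c, c'} := by
  obtain ⟨⟨a, b⟩, ⟨ha, hb⟩, hdiam⟩ := Set.exists_max_image (S ×ˢ S)
    (fun q => wordDist q.1 q.2) (hfin.prod hfin) (hne.prod hne)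
  have hmid := cayleyHull_sep_forall_wordDist_le_eq ha hb fun x hx y hy => hdiam (x, y) ⟨hx, hy⟩
  set D := wordDist a b
  have hbary : cayleyBarycentre n (cayleyHull n S) =
      {geodesicPoint a b (D / 2), geodesicPoint a b (D - D / 2)} := by
    rw [← hmid, cayleyBarycentre_eq_of_le_cayleyEcc (R := D - D / 2)]
    · simp only [cayleyEcc_cayleyHull_le_iff hfin hne]
    · intro v
      have hv := (cayleyEcc_cayleyHull_le_iff hfin hne (v := v)).1 le_rfl
      have := hv a ha
      have := hv b hb
      have := wordDist_triangle a v b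
      rw [wordDist_comm a v] at this
      omega
    · refine ⟨geodesicPoint a b (D / 2), ?_⟩
      have h := hmid ▸ Set.mem_insert (geodesicPoint a b (D / 2)) _
      exact ⟨h.1, (cayleyEcc_cayleyHull_le_iff hfin hne).2 h.2⟩
  by_cases hD : D / 2 = D - D / 2
  · exact .inl ⟨_, by rw [hbary, ← hD, Set.pair_eq_singleton]⟩
  · obtain ⟨e, he⟩ := exists_geodesicPoint_succ_eq_mul a b (D / 2) (by omega)
    refine .inr ⟨_, _, ?_, hbary⟩
    rw [show D - D / 2 = D / 2 + 1 by omega, he]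
    exact Cayley.adj_mul_mk_singleton _ e

end Hull

section Admissible

variable {n : ℕ}

def IsAdmissibleBarycentre (B : Set (FreeGroup (Fin n))) : Prop :=
  B = {1} ∨ ∃ i : Fin n, B = {1, of i}

def IsAdmissibleSupport (T : Set (FreeGroup (Fin n))) : Prop :=
  T = ∅ ∨ IsAdmissibleBarycentre (cayleyBarycentre n (cayleyHull n T))

lemma of_mul_of_ne_one (i j : Fin n) : of j * of i ≠ 1 := fun h => by
  have := congrArg toWord (eq_inv_of_mul_eq_one_left h)
  simp [toWord_inv, invRev] at this

lemma IsAdmissibleBarycentre.eq_one_of_image_mul_left {B : Set (FreeGroup (Fin n))}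
    {u : FreeGroup (Fin n)} (hB : IsAdmissibleBarycentre B)
    (hB' : IsAdmissibleBarycentre ((u * ·) '' B)) : u = 1 := by
  have hu : u ∈ (u * ·) '' B := ⟨1, by rcases hB with rfl | ⟨i, rfl⟩ <;> simp, mul_one u⟩
  rcases hB' with hB' | ⟨j, hB'⟩
  · rwa [hB'] at hu
  rw [hB'] at hu
  rcases hu with rfl | rfl
  · rfl
  exfalso
  rcases hB with rfl | ⟨i, rfl⟩
  · have : (1 : FreeGroup (Fin n)) ∈ (of j * ·) '' {1} := hB' ▸ Set.mem_insert 1 _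
    simp at this
  · have : of j * of i ∈ ({1, of j} : Set (FreeGroup (Fin n))) := hB' ▸ ⟨of i, by simp, rfl⟩
    simp [of_mul_of_ne_one, of_ne_one] at this

lemma IsAdmissibleSupport.eq_one_of_image_mul_left {T : Set (FreeGroup (Fin n))}
    {u : FreeGroup (Fin n)} (hT : T.Nonempty) (h : IsAdmissibleSupport T)
    (h' : IsAdmissibleSupport ((u * ·) '' T)) : u = 1 := by
  rcases h with h | h
  · exact absurd h hT.ne_empty
  rcases h' with h' | h'
  · exact absurd h' (hT.image _).ne_empty
  rw [cayleyHull_image_mul_left, cayleyBarycentre_image_mul_left] at h'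
  exact h.eq_one_of_image_mul_left h'

lemma exists_isAdmissibleSupport_image_mul_left {S : Set (FreeGroup (Fin n))} (hS : S.Finite) :
    ∃ w : FreeGroup (Fin n), IsAdmissibleSupport ((w * ·) '' S) := by
  rcases S.eq_empty_or_nonempty with rfl | hne
  · exact ⟨1, .inl (Set.image_empty _)⟩
  simp only [IsAdmissibleSupport, IsAdmissibleBarycentre, cayleyHull_image_mul_left,
    cayleyBarycentre_image_mul_left]
  rcases cayleyBarycentre_cayleyHull_eq_singleton_or_adj hS hne with
    ⟨c, hc⟩ | ⟨c, c', ⟨-, i, rfl | rfl⟩, hc⟩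
  · exact ⟨c⁻¹, .inr (.inl (by simp [hc]))⟩
  · exact ⟨c⁻¹, .inr (.inr ⟨i, by simp [hc, Set.image_pair]⟩)⟩
  · exact ⟨c'⁻¹, .inr (.inr ⟨i, by simp [hc, Set.image_pair, Set.pair_comm]⟩)⟩

end Admissible

lemma setOf_inv_mul_ne_eq_image {G F : Type*} [Group G] (f : G → F) (p : F) (w : G) :
    {x | f (w⁻¹ * x) ≠ p} = (w * ·) '' {x | f x ≠ p} := by
  rw [Set.image_mul_left]
  rfl

theorem admissible_maps_are_orbit_representatives_general
    (n : ℕ) (F : Type) (p : F)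
    (f : FreeGroup (Fin n) → F) (hf : {x | f x ≠ p}.Finite) :
    ∃! g : FreeGroup (Fin n) → F,
      ({x | g x ≠ p}.Finite ∧
        ({x | g x ≠ p} = ∅ ∨
          cayleyBarycentre n (cayleyHull n {x | g x ≠ p}) = {1} ∨
          ∃ i : Fin n,
            cayleyBarycentre n (cayleyHull n {x | g x ≠ p}) = {1, FreeGroup.of i}))
      ∧ ∃ w : FreeGroup (Fin n), (fun x => f (w⁻¹ * x)) = g := by
  obtain ⟨w, hw⟩ := exists_isAdmissibleSupport_image_mul_left hf
  refine ⟨fun x => f (w⁻¹ * x), ⟨⟨?_, ?_⟩, w, rfl⟩, ?_⟩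
  · exact setOf_inv_mul_ne_eq_image f p w ▸ hf.image _
  · exact setOf_inv_mul_ne_eq_image f p w ▸ hw
  rintro - ⟨⟨-, hw'⟩, w', rfl⟩
  rcases {x | f x ≠ p}.eq_empty_or_nonempty with hempty | hne
  · have hconst : ∀ x, f x = p := by simpa [Set.eq_empty_iff_forall_notMem] using hempty
    simp only [hconst]
  have htrans : (w' * ·) '' {x | f x ≠ p} = ((w' * w⁻¹) * ·) '' ((w * ·) '' {x | f x ≠ p}) := by
    simp [Set.image_image, mul_assoc]
  rw [setOf_inv_mul_ne_eq_image, htrans] at hw'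
  have := hw.eq_one_of_image_mul_left (hne.image _) hw'
  rw [mul_inv_eq_one.1 this]

/-- The maps whose support has an admissible convex hull in the Cayley tree —
i.e. whose barycentre is the vertex `e` or an edge `[e, a_i]` (together with the
constant map, whose support is empty) — form a complete set of representatives
for the orbits of the left-translation action of `F_n` on the finitely supported
maps `F_n → F`: every finitely supported map lies in the orbit of exactly one
such map. -/
theorem admissible_maps_are_orbit_representatives
    (n : ℕ) (F : Type) [Finite F] (p : F)
    (f : FreeGroup (Fin n) → F) (hf : {x | f x ≠ p}.Finite) :
    ∃! g : FreeGroup (Fin n) → F,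
      ({x | g x ≠ p}.Finite ∧
        ({x | g x ≠ p} = ∅ ∨
          cayleyBarycentre n (cayleyHull n {x | g x ≠ p}) = {1} ∨
          ∃ i : Fin n,
            cayleyBarycentre n (cayleyHull n {x | g x ≠ p}) = {1, FreeGroup.of i}))
      ∧ ∃ w : FreeGroup (Fin n), (fun x => f (w⁻¹ * x)) = g :=
  admissible_maps_are_orbit_representatives_general n F p f hf
end
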